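/- In a finite ordered normal orthogroup S satisfying x^ω ≤ x^ω y^ω x^ω, the map α : S → E(S) × ∏_{e ∈ E(S)} H_e^⊤, α(s) = (s^ω, (ψ_e(s))_{e ∈ E(S)}), is an injective homomorphism of ordered semigroups, where ψ_e(s) = ese if e s^ω e = e and ψ_e(s) = ⊤ otherwise. -/
import Mathlib


/-- `spow a n` is the power `a^(n+1)` in a semigroup. -/
def spow {S : Type*} [Semigroup S] (a : S) : ℕ → S
  | 0 => a
  | n + 1 => spow a n * a

section PartA
variable {S : Type*} [Semigroup S]

lemma spow_add (a : S) (m n : ℕ) : spow a m * spow a n = spow a (m + n + 1) := by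
  induction n with
  | zero => rfl
  | succ n ih =>
    show spow a m * (spow a n * a) = spow a (m + (n+1) + 1)
    rw [← mul_assoc, ih]; rfl

lemma spow_comm (a : S) (n : ℕ) : a * spow a n = spow a n * a := by
  induction n with
  | zero => rfl
  | succ n ih =>
    show a * (spow a n * a) = spow a (n+1) * a
    rw [← mul_assoc, ih]; rfl

lemma spow_idem (a : S) (ha : a * a = a) (n : ℕ) : spow a n = a := by
  induction n with
  | zero => rfl
  | succ n ih => show spow a n * a = a; rw [ih, ha]

lemma spow_spow (a : S) (m n : ℕ) : spow (spow a m) n = spow a (m + n + m * n) := by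
  induction n with
  | zero => show spow a m = spow a (m + 0 + m * 0); norm_num
  | succ n ih =>
    show spow (spow a m) n * spow a m = spow a (m + (n+1) + m * (n+1))
    rw [ih, spow_add]
    congr 1; ring

variable (ω : S → S)
  (hpow : ∀ a : S, ∃ n : ℕ, ω a = spow a n)
  (hidem : ∀ a : S, ω a * ω a = ω a)
  (hcr_left : ∀ a : S, ω a * a = a)
  (hcr_right : ∀ a : S, a * ω a = a)

include hpow in
lemma omega_of_idem (a : S) (ha : a * a = a) : ω a = a := by
  obtain ⟨n, hn⟩ := hpow a
  rw [hn, spow_idem a ha]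

include hpow hidem in
lemma omega_spow_eq (a : S) (k : ℕ) : ω (spow a k) = ω a := by
  obtain ⟨m, hm⟩ := hpow (spow a k)
  obtain ⟨n, hn⟩ := hpow a
  have h1 : ω (spow a k) = spow a (k + m + k * m) := by rw [hm, spow_spow]
  have h2 : ω a = spow a n := hn
  -- both are idempotent powers of a; idempotent powers are unique
  have hi : spow a (k + m + k * m) * spow a (k + m + k * m) = spow a (k + m + k * m) := by
    rw [← h1]; exact hidem _
  have hj : spow a n * spow a n = spow a n := by rw [← h2]; exact hidem _
  -- spow a i = spow (spow a i) j = spow a (i + j + i*j)  whenever spow a i idempotent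
  have key : ∀ i j : ℕ, spow a i * spow a i = spow a i → spow a i = spow a (i + j + i * j) := by
    intro i j h
    rw [← spow_spow, spow_idem _ h]
  have e1 : spow a (k + m + k * m) = spow a ((k + m + k * m) + n + (k + m + k * m) * n) :=
    key _ n hi
  have e2 : spow a n = spow a (n + (k + m + k * m) + n * (k + m + k * m)) := key _ _ hj
  rw [h1, h2, e1, e2]
  congr 1; ring

include hcr_right in
lemma spow_mul_omega (a : S) (k : ℕ) : spow a k * ω a = spow a k := by
  induction k with
  | zero => exact hcr_right a
  | succ k ih => show spow a k * a * ω a = spow a k * a; rw [mul_assoc, hcr_right]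

include hcr_left in
lemma omega_mul_spow (a : S) (k : ℕ) : ω a * spow a k = spow a k := by
  induction k with
  | zero => exact hcr_left a
  | succ k ih => show ω a * (spow a k * a) = spow a k * a; rw [← mul_assoc, ih]

include hcr_left hcr_right in
lemma spow_cycle (x : S) (j : ℕ) (hj : ω x = spow x j) (m : ℕ) :
    spow x (m * (j + 1)) = x := by
  induction m with
  | zero => norm_num [spow]
  | succ m ih =>
    have hidx : (m + 1) * (j + 1) = m * (j + 1) + j + 1 := by ring
    rw [hidx, ← spow_add, ih, ← hj]
    exact hcr_right x

include hidem in
lemma spow_omega_level (a : S) (n : ℕ) (hn : ω a = spow a n) (m : ℕ) :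
    spow a (m * (n + 1) + n) = ω a := by
  induction m with
  | zero => simpa using hn.symm
  | succ m ih =>
    have hidx : (m + 1) * (n + 1) + n = (m * (n + 1) + n) + n + 1 := by ring
    rw [hidx, ← spow_add, ih, ← hn, hidem]

end PartA

section Band
variable {S : Type*} [Semigroup S]
variable (horthodox : ∀ e f : S, e * e = e → f * f = f → (e * f) * (e * f) = e * f)
variable (hnormal : ∀ e f g : S, e * e = e → f * f = f → g * g = g →
      e * f * e * g * e = e * g * e * f * e)

include horthodox hnormal in
/-- Normality of the band: `zxyz = zyxz` for idempotents. -/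
lemma band_nm (z x y : S) (hz : z * z = z) (hx : x * x = x) (hy : y * y = y) :
    z * x * y * z = z * y * x * z := by
  have hxy : (x*y)*(x*y) = x*y := horthodox x y hx hy
  have hyx : (y*x)*(y*x) = y*x := horthodox y x hy hx
  have hzx : (z*x)*(z*x) = z*x := horthodox z x hz hx
  have hzxy : (z*x*y)*(z*x*y) = z*x*y := horthodox (z*x) y hzx hy
  have hzxyx : (z*x*y*x)*(z*x*y*x) = z*x*y*x := horthodox (z*x*y) x hzxy hx
  have hyxz : (y*x*z)*(y*x*z) = y*x*z := horthodox (y*x) z hyx hz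
  have hyxzx : (y*x*z*x)*(y*x*z*x) = y*x*z*x := horthodox (y*x*z) x hyxz hx
  have hyxzxy : (y*x*z*x*y)*(y*x*z*x*y) = y*x*z*x*y := horthodox (y*x*z*x) y hyxzx hy
  have hyxzxyx : (y*x*z*x*y*x)*(y*x*z*x*y*x) = y*x*z*x*y*x := horthodox (y*x*z*x*y) x hyxzxy hx
  have hbig : (y*x*z*x*y*x*y)*(y*x*z*x*y*x*y) = y*x*z*x*y*x*y :=
    horthodox (y*x*z*x*y*x) y hyxzxyx hy
  have hxyx : (x*y*x)*(x*y*x) = x*y*x := horthodox (x*y) x hxy hx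
  have hxyxz : (x*y*x*z)*(x*y*x*z) = x*y*x*z := horthodox (x*y*x) z hxyx hz
  calc z*x*y*z
      = z*(x*y)*z := by simp only [mul_assoc]
    _ = z*((x*y)*(x*y))*z := by rw [hxy]
    _ = (z*x*y*x)*(y*z) := by simp only [mul_assoc]
    _ = ((z*x*y*x)*(z*x*y*x))*(y*z) := by rw [hzxyx]
    _ = (z*x)*((y*x*z)*(x*(y*(x*(y*z))))) := by simp only [mul_assoc]
    _ = (z*x)*(((y*x*z)*(y*x*z))*(x*(y*(x*(y*z))))) := by rw [hyxz]
    _ = z*(x*y*x)*z*(y*x*z*x*y*x*y)*z := by simp only [mul_assoc]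
    _ = z*(y*x*z*x*y*x*y)*z*(x*y*x)*z := hnormal z (x*y*x) (y*x*z*x*y*x*y) hz hxyx hbig
    _ = (z*y)*((x*z*x*y*x)*(y*(z*(x*(y*(x*z)))))) := by simp only [mul_assoc]
    _ = (z*y)*((x*y*x*z*x)*(y*(z*(x*(y*(x*z)))))) := by rw [hnormal x z y hx hz hy]
    _ = (z*y*x*y*x)*(((z*x*y)*(z*x*y))*(x*z)) := by simp only [mul_assoc]
    _ = (z*y*x*y*x)*((z*x*y)*(x*z)) := by rw [hzxy]
    _ = (z*y)*((x*y*x*z)*(x*y*x*z)) := by simp only [mul_assoc]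
    _ = (z*y)*(x*y*x*z) := by rw [hxyxz]
    _ = z*((y*x)*(y*x))*z := by simp only [mul_assoc]
    _ = z*(y*x)*z := by rw [hyx]
    _ = z*y*x*z := by simp only [mul_assoc]

include horthodox hnormal in
/-- 4-variable normality: interior letters commute. -/
lemma band_comm4 (a x y b : S) (ha : a * a = a) (hx : x * x = x) (hy : y * y = y)
    (hb : b * b = b) : a * x * y * b = a * y * x * b := by
  have hxy : (x*y)*(x*y) = x*y := horthodox x y hx hy
  have hyx : (y*x)*(y*x) = y*x := horthodox y x hy hx
  have hax : (a*x)*(a*x) = a*x := horthodox a x ha hx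
  have haxy : (a*x*y)*(a*x*y) = a*x*y := horthodox (a*x) y hax hy
  have haxyb : (a*x*y*b)*(a*x*y*b) = a*x*y*b := horthodox (a*x*y) b haxy hb
  have hay : (a*y)*(a*y) = a*y := horthodox a y ha hy
  have hayx : (a*y*x)*(a*y*x) = a*y*x := horthodox (a*y) x hay hx
  have hayxb : (a*y*x*b)*(a*y*x*b) = a*y*x*b := horthodox (a*y*x) b hayx hb
  have n1 : (x*y)*b*a*(x*y) = (x*y)*a*b*(x*y) := band_nm horthodox hnormal (x*y) b a hxy hb ha
  have n2 : a*x*y*a = a*y*x*a := band_nm horthodox hnormal a x y ha hx hy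
  have n3 : b*x*y*b = b*y*x*b := band_nm horthodox hnormal b x y hb hx hy
  have n4 : (y*x)*a*b*(y*x) = (y*x)*b*a*(y*x) := band_nm horthodox hnormal (y*x) a b hyx ha hb
  calc a*x*y*b
      = (a*x*y*b)*(a*x*y*b) := haxyb.symm
    _ = a*((x*y)*b*a*(x*y))*b := by simp only [mul_assoc]
    _ = a*((x*y)*a*b*(x*y))*b := by rw [n1]
    _ = (a*x*y*a)*(b*x*y*b) := by simp only [mul_assoc]
    _ = (a*y*x*a)*(b*y*x*b) := by rw [n2, n3]
    _ = a*((y*x)*a*b*(y*x))*b := by simp only [mul_assoc]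
    _ = a*((y*x)*b*a*(y*x))*b := by rw [n4]
    _ = (a*y*x*b)*(a*y*x*b) := by simp only [mul_assoc]
    _ = a*y*x*b := hayxb

include horthodox hnormal in
/-- Regularity: `zxzyz = zxyz` for idempotents. -/
lemma band_reg (z x y : S) (hz : z * z = z) (hx : x * x = x) (hy : y * y = y) :
    z * x * z * y * z = z * x * y * z := by
  have hzy : (z*y)*(z*y) = z*y := horthodox z y hz hy
  calc z*x*z*y*z
      = z*x*(z*y)*z := by simp only [mul_assoc]
    _ = z*(z*y)*x*z := band_nm horthodox hnormal z x (z*y) hz hx hzy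
    _ = (z*z)*(y*(x*z)) := by simp only [mul_assoc]
    _ = z*(y*(x*z)) := by rw [hz]
    _ = z*y*x*z := by simp only [mul_assoc]
    _ = z*x*y*z := band_nm horthodox hnormal z y x hz hy hx

include horthodox hnormal in
/-- Idempotents below a common idempotent `f` commute. -/
lemma band_comm_below (f u v : S) (hf : f * f = f) (hu : u * u = u) (hv : v * v = v)
    (hfu : f * u = u) (huf : u * f = u) (hfv : f * v = v) (hvf : v * f = v) :
    u * v = v * u := by
  calc u*v
      = (f*u)*(v*f) := by rw [hfu, hvf]
    _ = f*u*v*f := by simp only [mul_assoc]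
    _ = f*v*u*f := band_comm4 horthodox hnormal f u v f hf hu hv hf
    _ = (f*v)*(u*f) := by simp only [mul_assoc]
    _ = v*u := by rw [hfv, huf]

end Band

def piIter {S : Type*} [Semigroup S] (a b c : S) : ℕ → S
  | 0 => c
  | k+1 => a * piIter a b c k * b

def meetIter {S : Type*} [Semigroup S] (a b c : S) : ℕ → S
  | 0 => c
  | k+1 => meetIter a b c k * piIter a b c (k+1)

section Conj
variable {S : Type*} [Semigroup S]

lemma conj_comm (ω : S → S)
    (hpow : ∀ a : S, ∃ n : ℕ, ω a = spow a n)
    (hidem : ∀ a : S, ω a * ω a = ω a)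
    (hcr_left : ∀ a : S, ω a * a = a)
    (hcr_right : ∀ a : S, a * ω a = a)
    (horthodox : ∀ e f : S, e * e = e → f * f = f → (e * f) * (e * f) = e * f)
    (hnormal : ∀ e f g : S, e * e = e → f * f = f → g * g = g →
      e * f * e * g * e = e * g * e * f * e)
    (a c : S) (hc : c * c = c) (hfc : ω a * c = c) (hcf : c * ω a = c) :
    a * c = c * a := by
  obtain ⟨n, hn⟩ := hpow a
  have hba : spow a (n+n) * a = ω a := by
    have h1 : spow a n * spow a n = spow a (n + n + 1) := spow_add a n n
    rw [show spow a (n+n) * a = spow a (n+n+1) from rfl, ← h1, ← hn, hidem a]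
  have hab : a * spow a (n+n) = ω a := by rw [spow_comm]; exact hba
  have hbf : spow a (n+n) * ω a = spow a (n+n) := spow_mul_omega ω hcr_right a (n+n)
  have hfa : ω a * a = a := hcr_left a
  have hff : ω a * ω a = ω a := hidem a
  set b := spow a (n+n) with hbdef
  let D : S → Prop := fun d => d * d = d ∧ ω a * d = d ∧ d * ω a = d
  have hDc : D c := ⟨hc, hfc, hcf⟩
  have hDpi : ∀ d, D d → D (a * d * b) := by
    intro d hd
    obtain ⟨hdd, hfd, hdf⟩ := hd
    refine ⟨?_, ?_, ?_⟩
    · calc (a*d*b)*(a*d*b)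
          = a*(d*(b*a)*d)*b := by simp only [mul_assoc]
        _ = a*(d*(ω a)*d)*b := by rw [hba]
        _ = a*((d*ω a)*d)*b := by simp only [mul_assoc]
        _ = a*(d*d)*b := by rw [hdf]
        _ = a*d*b := by rw [hdd]
    · calc ω a*(a*d*b) = (ω a*a)*(d*b) := by simp only [mul_assoc]
        _ = a*(d*b) := by rw [hfa]
        _ = a*d*b := by simp only [mul_assoc]
    · calc (a*d*b)*ω a = a*(d*(b*ω a)) := by simp only [mul_assoc]
        _ = a*(d*b) := by rw [hbf]
        _ = a*d*b := by simp only [mul_assoc]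
  have hpi_comm : ∀ d, D d → a * d = (a * d * b) * a := by
    intro d hd
    calc a*d = a*(d*ω a) := by rw [hd.2.2]
      _ = a*(d*(b*a)) := by rw [hba]
      _ = (a*d*b)*a := by simp only [mul_assoc]
  have hDpiIter : ∀ d, D d → ∀ k, D (piIter a b d k) := by
    intro d hd k
    induction k with
    | zero => exact hd
    | succ k ih => exact hDpi _ ih
  have hcomm : ∀ u v, D u → D v → u * v = v * u := fun u v hu hv =>
    band_comm_below horthodox hnormal (ω a) u v hff hu.1 hv.1 hu.2.1 hu.2.2 hv.2.1 hv.2.2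
  have hDmul : ∀ u v, D u → D v → D (u * v) := by
    intro u v hu hv
    refine ⟨?_, ?_, ?_⟩
    · calc (u*v)*(u*v) = u*(v*u)*v := by simp only [mul_assoc]
        _ = u*(u*v)*v := by rw [hcomm v u hv hu]
        _ = (u*u)*(v*v) := by simp only [mul_assoc]
        _ = u*v := by rw [hu.1, hv.1]
    · calc ω a*(u*v) = (ω a*u)*v := by simp only [mul_assoc]
        _ = u*v := by rw [hu.2.1]
    · calc (u*v)*ω a = u*(v*ω a) := by simp only [mul_assoc]
        _ = u*v := by rw [hv.2.2]
  have hDmeet : ∀ d, D d → ∀ k, D (meetIter a b d k) := by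
    intro d hd k
    induction k with
    | zero => exact hd
    | succ k ih => exact hDmul _ _ ih (hDpiIter d hd (k+1))
  have hshift : ∀ d k, piIter a b (a*d*b) k = piIter a b d (k+1) := by
    intro d k
    induction k with
    | zero => rfl
    | succ k ih =>
      show a * piIter a b (a*d*b) k * b = _
      rw [ih]; rfl
  have hpush : ∀ k, ∀ d, D d → spow a k * d = piIter a b d (k+1) * spow a k := by
    intro k
    induction k with
    | zero => intro d hd; exact hpi_comm d hd
    | succ k ih =>
      intro d hd
      calc spow a (k+1) * d = spow a k * (a * d) := by
            show spow a k * a * d = _; rw [mul_assoc]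
        _ = spow a k * ((a*d*b)*a) := congrArg (fun w => spow a k * w) (hpi_comm d hd)
        _ = (spow a k * (a*d*b))*a := by rw [← mul_assoc]
        _ = (piIter a b (a*d*b) (k+1) * spow a k)*a := by rw [ih _ (hDpi d hd)]
        _ = piIter a b d (k+2) * spow a (k+1) := by rw [hshift, mul_assoc]; rfl
  have hxpow : ∀ d, D d → ∀ k, spow (d*a) k = meetIter a b d k * spow a k := by
    intro d hd k
    induction k with
    | zero => rfl
    | succ k ih =>
      calc spow (d*a) (k+1) = spow (d*a) k * (d*a) := rfl
        _ = (meetIter a b d k * spow a k) * (d*a) := by rw [ih]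
        _ = meetIter a b d k * (spow a k * d) * a := by simp only [mul_assoc]
        _ = meetIter a b d k * (piIter a b d (k+1) * spow a k) * a := by rw [hpush k d hd]
        _ = (meetIter a b d k * piIter a b d (k+1)) * (spow a k * a) := by simp only [mul_assoc]
        _ = meetIter a b d (k+1) * spow a (k+1) := rfl
  have habsorb : ∀ d, D d → ∀ k, meetIter a b d (k+1) * piIter a b d 1 = meetIter a b d (k+1) := by
    intro d hd k
    induction k with
    | zero =>
      show (d * piIter a b d 1) * piIter a b d 1 = d * piIter a b d 1
      rw [mul_assoc, (hDpiIter d hd 1).1]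
    | succ k ih =>
      calc meetIter a b d (k+2) * piIter a b d 1
          = meetIter a b d (k+1) * (piIter a b d (k+2) * piIter a b d 1) := by
            show (meetIter a b d (k+1) * piIter a b d (k+2)) * piIter a b d 1 = _
            rw [mul_assoc]
        _ = meetIter a b d (k+1) * (piIter a b d 1 * piIter a b d (k+2)) := by
            rw [hcomm _ _ (hDpiIter d hd (k+2)) (hDpiIter d hd 1)]
        _ = (meetIter a b d (k+1) * piIter a b d 1) * piIter a b d (k+2) := by rw [mul_assoc]
        _ = meetIter a b d (k+1) * piIter a b d (k+2) := by rw [ih]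
        _ = meetIter a b d (k+2) := rfl
  have key : ∀ d, D d → d * piIter a b d 1 = d ∧ piIter a b d 1 * d = d := by
    intro d hd
    obtain ⟨j, hj⟩ := hpow (d*a)
    have hcyc : spow (d*a) ((n+1)*(j+1)) = d*a :=
      spow_cycle ω hcr_left hcr_right (d*a) j hj (n+1)
    have hK : (n+1)*(j+1) = (j*(n+1)+n)+1 := by ring
    have hsa : spow a ((n+1)*(j+1)) = a := by
      rw [hK, show spow a ((j*(n+1)+n)+1) = spow a (j*(n+1)+n) * a from rfl,
         spow_omega_level ω hidem a n hn j, hcr_left]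
    have hda : d * a = meetIter a b d ((n+1)*(j+1)) * a := by
      conv_lhs => rw [← hcyc]
      rw [hxpow d hd ((n+1)*(j+1)), hsa]
    have hdM : d = meetIter a b d ((n+1)*(j+1)) := by
      have h1 : d * (a * b) = meetIter a b d ((n+1)*(j+1)) * (a * b) := by
        rw [← mul_assoc, ← mul_assoc, hda]
      rw [hab] at h1
      rw [hd.2.2] at h1
      rw [(hDmeet d hd ((n+1)*(j+1))).2.2] at h1
      exact h1
    have hKpos : (n+1)*(j+1) = (n*(j+1)+j)+1 := by ring
    have habs := habsorb d hd (n*(j+1)+j)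
    rw [← hKpos] at habs
    have hd1 : d * piIter a b d 1 = d := by
      have h2 : d * piIter a b d 1
          = meetIter a b d ((n+1)*(j+1)) * piIter a b d 1 :=
        congrArg (fun w => w * piIter a b d 1) hdM
      rw [h2, habs, ← hdM]
    exact ⟨hd1, by rw [hcomm _ _ (hDpiIter d hd 1) hd]; exact hd1⟩
  have hcycpi : piIter a b c (n+1) = c := by
    have h1 := hpush n c hDc
    have h2 : piIter a b c (n+1) * ω a = piIter a b c (n+1) := (hDpiIter c hDc (n+1)).2.2
    rw [hn] at h2
    rw [← h1] at h2
    rw [← hn, hfc] at h2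
    exact h2.symm
  have htrans : ∀ p q r : S, p*q = p → q*p = p → q*r = q → r*q = q → p*r = p ∧ r*p = p := by
    intro p q r h1 h2 h3 h4
    constructor
    · calc p*r = (p*q)*r := by rw [h1]
        _ = p*(q*r) := by rw [mul_assoc]
        _ = p*q := by rw [h3]
        _ = p := h1
    · calc r*p = r*(q*p) := by rw [h2]
        _ = (r*q)*p := by rw [← mul_assoc]
        _ = q*p := by rw [h4]
        _ = p := h2
  have hchain : ∀ k, piIter a b c 1 * piIter a b c (1+k) = piIter a b c 1
      ∧ piIter a b c (1+k) * piIter a b c 1 = piIter a b c 1 := by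
    intro k
    induction k with
    | zero => exact ⟨(hDpiIter c hDc 1).1, (hDpiIter c hDc 1).1⟩
    | succ k ih =>
      have hstep := key (piIter a b c (1+k)) (hDpiIter c hDc (1+k))
      exact htrans _ _ _ ih.1 ih.2 hstep.1 hstep.2
  have hfinal : piIter a b c 1 = c := by
    have h1 := (hchain n).2
    rw [Nat.add_comm 1 n] at h1
    rw [hcycpi] at h1
    have h3 := (key c hDc).1
    rw [h3] at h1
    exact h1.symm
  have hres := hpi_comm c hDc
  rw [show a*c*b = piIter a b c 1 from rfl, hfinal] at hres
  exact hres

end Conj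

section Main
variable {S : Type*} [Semigroup S]

lemma inv_pow_right (ω : S → S) (hidem : ∀ a : S, ω a * ω a = ω a)
    (x : S) (m : ℕ) (hm : ω x = spow x m) : spow x (m+m) * x = ω x := by
  have h1 : spow x m * spow x m = spow x (m + m + 1) := spow_add x m m
  rw [show spow x (m+m) * x = spow x (m+m+1) from rfl, ← h1, ← hm, hidem x]

lemma inv_pow_left (ω : S → S) (hidem : ∀ a : S, ω a * ω a = ω a)
    (x : S) (m : ℕ) (hm : ω x = spow x m) : x * spow x (m+m) = ω x := by
  rw [spow_comm]; exact inv_pow_right ω hidem x m hm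

lemma omega_mul (ω : S → S)
    (hpow : ∀ a : S, ∃ n : ℕ, ω a = spow a n)
    (hidem : ∀ a : S, ω a * ω a = ω a)
    (hcr_left : ∀ a : S, ω a * a = a)
    (hcr_right : ∀ a : S, a * ω a = a)
    (horthodox : ∀ e f : S, e * e = e → f * f = f → (e * f) * (e * f) = e * f)
    (hnormal : ∀ e f g : S, e * e = e → f * f = f → g * g = g →
      e * f * e * g * e = e * g * e * f * e)
    (s t : S) : ω (s * t) = ω s * ω t := by
  have hgg := hidem t
  have hff := hidem s
  have hgfg_idem : (ω t*ω s*ω t)*(ω t*ω s*ω t) = ω t*ω s*ω t :=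
    horthodox (ω t*ω s) (ω t) (horthodox (ω t) (ω s) hgg hff) hgg
  have hgfg_l : ω t * (ω t*ω s*ω t) = ω t*ω s*ω t := by
    calc ω t*(ω t*ω s*ω t) = (ω t*ω t)*(ω s*ω t) := by simp only [mul_assoc]
      _ = ω t*(ω s*ω t) := by rw [hgg]
      _ = ω t*ω s*ω t := by simp only [mul_assoc]
  have hgfg_r : (ω t*ω s*ω t) * ω t = ω t*ω s*ω t := by
    calc (ω t*ω s*ω t)*ω t = ω t*ω s*(ω t*ω t) := by simp only [mul_assoc]
      _ = ω t*ω s*ω t := by rw [hgg]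
  have hCLt : t * (ω t*ω s*ω t) = (ω t*ω s*ω t) * t :=
    conj_comm ω hpow hidem hcr_left hcr_right horthodox hnormal t _ hgfg_idem hgfg_l hgfg_r
  have hfgf_idem : (ω s*ω t*ω s)*(ω s*ω t*ω s) = ω s*ω t*ω s :=
    horthodox (ω s*ω t) (ω s) (horthodox (ω s) (ω t) hff hgg) hff
  have hfgf_l : ω s * (ω s*ω t*ω s) = ω s*ω t*ω s := by
    calc ω s*(ω s*ω t*ω s) = (ω s*ω s)*(ω t*ω s) := by simp only [mul_assoc]
      _ = ω s*(ω t*ω s) := by rw [hff]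
      _ = ω s*ω t*ω s := by simp only [mul_assoc]
  have hfgf_r : (ω s*ω t*ω s) * ω s = ω s*ω t*ω s := by
    calc (ω s*ω t*ω s)*ω s = ω s*ω t*(ω s*ω s) := by simp only [mul_assoc]
      _ = ω s*ω t*ω s := by rw [hff]
  have hCLs : s * (ω s*ω t*ω s) = (ω s*ω t*ω s) * s :=
    conj_comm ω hpow hidem hcr_left hcr_right horthodox hnormal s _ hfgf_idem hfgf_l hfgf_r
  have step2 : (s*t)*(ω s*ω t) = s*t := by
    calc (s*t)*(ω s*ω t)
        = (s*(t*ω t))*(ω s*ω t) := by rw [hcr_right t]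
      _ = s*(t*(ω t*(ω s*ω t))) := by simp only [mul_assoc]
      _ = s*(t*(ω t*ω s*ω t)) := by simp only [mul_assoc]
      _ = s*((ω t*ω s*ω t)*t) := by rw [hCLt]
      _ = (s*(ω t*ω s*ω t))*t := by simp only [mul_assoc]
      _ = ((s*ω s)*(ω t*ω s*ω t))*t := by rw [hcr_right s]
      _ = (s*((ω s*ω t)*(ω s*ω t)))*t := by simp only [mul_assoc]
      _ = (s*(ω s*ω t))*t := by rw [horthodox (ω s) (ω t) hff hgg]
      _ = ((s*ω s)*ω t)*t := by simp only [mul_assoc]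
      _ = (s*ω t)*t := by rw [hcr_right s]
      _ = s*(ω t*t) := by simp only [mul_assoc]
      _ = s*t := by rw [hcr_left t]
  obtain ⟨ns, hns⟩ := hpow s
  obtain ⟨nt, hnt⟩ := hpow t
  have hbt : t * spow t (nt+nt) = ω t := inv_pow_left ω hidem t nt hnt
  have hbs : s * spow s (ns+ns) = ω s := inv_pow_left ω hidem s ns hns
  have hfbs : ω s * spow s (ns+ns) = spow s (ns+ns) := omega_mul_spow ω hcr_left s (ns+ns)
  have step3 : (s*t)*(spow t (nt+nt)*(ω t*ω s*ω t)*(spow s (ns+ns)*(ω s*ω t))) = ω s*ω t := by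
    calc (s*t)*(spow t (nt+nt)*(ω t*ω s*ω t)*(spow s (ns+ns)*(ω s*ω t)))
        = (s*(t*spow t (nt+nt)))*((ω t*ω s*ω t)*(spow s (ns+ns)*(ω s*ω t))) := by
          simp only [mul_assoc]
      _ = (s*ω t)*((ω t*ω s*ω t)*(spow s (ns+ns)*(ω s*ω t))) := by rw [hbt]
      _ = s*((ω t*ω t)*(ω s*(ω t*(spow s (ns+ns)*(ω s*ω t))))) := by simp only [mul_assoc]
      _ = s*(ω t*(ω s*(ω t*(spow s (ns+ns)*(ω s*ω t))))) := by rw [hgg]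
      _ = (s*(ω t*ω s*ω t))*(spow s (ns+ns)*(ω s*ω t)) := by simp only [mul_assoc]
      _ = ((s*ω s)*(ω t*ω s*ω t))*(spow s (ns+ns)*(ω s*ω t)) := by rw [hcr_right s]
      _ = (s*((ω s*ω t)*(ω s*ω t)))*(spow s (ns+ns)*(ω s*ω t)) := by simp only [mul_assoc]
      _ = (s*(ω s*ω t))*(spow s (ns+ns)*(ω s*ω t)) := by rw [horthodox (ω s) (ω t) hff hgg]
      _ = (s*(ω s*ω t))*((ω s*spow s (ns+ns))*(ω s*ω t)) := by rw [hfbs]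
      _ = (s*(ω s*ω t*ω s))*(spow s (ns+ns)*(ω s*ω t)) := by simp only [mul_assoc]
      _ = ((ω s*ω t*ω s)*s)*(spow s (ns+ns)*(ω s*ω t)) := by rw [hCLs]
      _ = (ω s*ω t*ω s)*((s*spow s (ns+ns))*(ω s*ω t)) := by simp only [mul_assoc]
      _ = (ω s*ω t*ω s)*(ω s*(ω s*ω t)) := by rw [hbs]
      _ = (ω s*ω t)*((ω s*ω s)*(ω s*ω t)) := by simp only [mul_assoc]
      _ = (ω s*ω t)*(ω s*(ω s*ω t)) := by rw [hff]
      _ = (ω s*ω t)*((ω s*ω s)*ω t) := by simp only [mul_assoc]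
      _ = (ω s*ω t)*(ω s*ω t) := by rw [hff]
      _ = ω s*ω t := horthodox (ω s) (ω t) hff hgg
  obtain ⟨K, hK⟩ := hpow (s*t)
  have habs : ∀ k, spow (s*t) k * (ω s*ω t) = spow (s*t) k := by
    intro k
    induction k with
    | zero => exact step2
    | succ k ih =>
      show (spow (s*t) k * (s*t)) * (ω s*ω t) = spow (s*t) k * (s*t)
      rw [mul_assoc, step2]
  have h1 : ω (s*t) * (ω s*ω t) = ω (s*t) := by rw [hK]; exact habs K
  have h2 : ω (s*t) * (ω s*ω t) = ω s*ω t := by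
    calc ω (s*t) * (ω s*ω t)
        = ω (s*t) * ((s*t)*(spow t (nt+nt)*(ω t*ω s*ω t)*(spow s (ns+ns)*(ω s*ω t)))) := by
          rw [step3]
      _ = (ω (s*t) * (s*t))*(spow t (nt+nt)*(ω t*ω s*ω t)*(spow s (ns+ns)*(ω s*ω t))) := by
          rw [← mul_assoc]
      _ = (s*t)*(spow t (nt+nt)*(ω t*ω s*ω t)*(spow s (ns+ns)*(ω s*ω t))) := by
          rw [hcr_left (s*t)]
      _ = ω s*ω t := step3
  exact h1.symm.trans h2

end Main

section OrderLemmas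
variable {S : Type*} [Semigroup S] [PartialOrder S]

lemma spow_mono (hle_left : ∀ a b c : S, a ≤ b → c * a ≤ c * b)
    (hle_right : ∀ a b c : S, a ≤ b → a * c ≤ b * c)
    (s t : S) (hst : s ≤ t) : ∀ k, spow s k ≤ spow t k := by
  intro k
  induction k with
  | zero => exact hst
  | succ k ih =>
    show spow s k * s ≤ spow t k * t
    exact le_trans (hle_right _ _ s ih) (hle_left _ _ (spow t k) hst)

lemma omega_mono (ω : S → S)
    (hpow : ∀ a : S, ∃ n : ℕ, ω a = spow a n)
    (hidem : ∀ a : S, ω a * ω a = ω a)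
    (hle_left : ∀ a b c : S, a ≤ b → c * a ≤ c * b)
    (hle_right : ∀ a b c : S, a ≤ b → a * c ≤ b * c)
    (s t : S) (hst : s ≤ t) : ω s ≤ ω t := by
  obtain ⟨m, hm⟩ := hpow s
  obtain ⟨k, hk⟩ := hpow t
  have hS : ω s = spow s (m + k + m*k) := by
    have h1 : spow (spow s m) k = spow s (m + k + m*k) := spow_spow s m k
    rw [← h1, ← hm, spow_idem (ω s) (hidem s) k]
  have hT : ω t = spow t (m + k + m*k) := by
    have h1 : spow (spow t k) m = spow t (k + m + k*m) := spow_spow t k m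
    have h2 : k + m + k*m = m + k + m*k := by ring
    rw [h2] at h1
    rw [← h1, ← hk, spow_idem (ω t) (hidem t) m]
  rw [hS, hT]
  exact spow_mono hle_left hle_right s t hst _

lemma group_triv (ω : S → S)
    (hpow : ∀ a : S, ∃ n : ℕ, ω a = spow a n)
    (hidem : ∀ a : S, ω a * ω a = ω a)
    (hcr_left : ∀ a : S, ω a * a = a)
    (hcr_right : ∀ a : S, a * ω a = a)
    (horthodox : ∀ e f : S, e * e = e → f * f = f → (e * f) * (e * f) = e * f)
    (hnormal : ∀ e f g : S, e * e = e → f * f = f → g * g = g →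
      e * f * e * g * e = e * g * e * f * e)
    (hle_left : ∀ a b c : S, a ≤ b → c * a ≤ c * b)
    (hle_right : ∀ a b c : S, a ≤ b → a * c ≤ b * c)
    (x y : S) (hxy : x ≤ y) (hw : ω x = ω y) : x = y := by
  obtain ⟨nx, hnx⟩ := hpow x
  have hux : spow x (nx+nx) * x = ω x := inv_pow_right ω hidem x nx hnx
  have hxu : x * spow x (nx+nx) = ω x := inv_pow_left ω hidem x nx hnx
  have hEz : ω x ≤ spow x (nx+nx) * y := by
    have := hle_left x y (spow x (nx+nx)) hxy
    rwa [hux] at this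
  have hωz : ω (spow x (nx+nx) * y) = ω x := by
    rw [omega_mul ω hpow hidem hcr_left hcr_right horthodox hnormal,
        omega_spow_eq ω hpow hidem x (nx+nx), ← hw, hidem]
  set z := spow x (nx+nx) * y with hzdef
  have hchain : ∀ k, spow z k ≤ spow z (k+1) := by
    intro k
    induction k with
    | zero =>
      show z ≤ z * z
      have h1 : z * ω z ≤ z * z := hle_left _ _ z (by rw [hωz]; exact hEz)
      rwa [hcr_right z] at h1
    | succ k ih =>
      show spow z k * z ≤ spow z (k+1) * z
      exact hle_right _ _ z ih
  have hup : ∀ k, z ≤ spow z k := by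
    intro k
    induction k with
    | zero => exact le_refl z
    | succ k ih => exact le_trans ih (hchain k)
  obtain ⟨nz, hnz⟩ := hpow z
  have hz1 : z ≤ ω x := by
    have := hup nz
    rw [← hnz, hωz] at this
    exact this
  have hzE : z = ω x := le_antisymm hz1 hEz
  symm
  calc y = ω y * y := (hcr_left y).symm
    _ = ω x * y := by rw [hw]
    _ = (x * spow x (nx+nx)) * y := by rw [hxu]
    _ = x * z := by rw [mul_assoc]
    _ = x * ω x := by rw [hzE]
    _ = x := hcr_right x

end OrderLemmas

/-- In a finite ordered normal orthogroup S satisfying x^ω ≤ x^ω y^ω x^ω, the map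
α : S → E(S) × ∏_{e ∈ E(S)} H_e^⊤, α(s) = (s^ω, (ψ_e(s))_e), is an injective
homomorphism of ordered semigroups, where ψ_e(s) = ese when e s^ω e = e and ⊤
otherwise.  The homomorphism property is expressed componentwise (first the idempotent
component s ↦ s^ω, then each ψ_e-component, where ψ_e s is encoded by the condition
`e * ω s * e = e` of being non-⊤ together with the value ese); injectivity says that
two elements with equal images under all components coincide. -/
theorem alpha_injective_ordered_homomorphism
    {S : Type*} [Semigroup S] [Fintype S] [PartialOrder S]
    (hle_left : ∀ a b c : S, a ≤ b → c * a ≤ c * b)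
    (hle_right : ∀ a b c : S, a ≤ b → a * c ≤ b * c)
    (ω : S → S)
    (hpow : ∀ a : S, ∃ n : ℕ, ω a = spow a n)
    (hidem : ∀ a : S, ω a * ω a = ω a)
    (hcr_left : ∀ a : S, ω a * a = a)
    (hcr_right : ∀ a : S, a * ω a = a)
    (horthodox : ∀ e f : S, e * e = e → f * f = f → (e * f) * (e * f) = e * f)
    (hnormal : ∀ e f g : S, e * e = e → f * f = f → g * g = g →
      e * f * e * g * e = e * g * e * f * e)
    (hineq : ∀ s t : S, ω s ≤ ω s * ω t * ω s) :
    -- homomorphism: the E(S)-component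
    (∀ s t : S, ω (s * t) = ω s * ω t) ∧
    (∀ s t : S, s ≤ t → ω s ≤ ω t) ∧
    -- homomorphism: each ψ_e-component is multiplicative and isotone
    (∀ e : S, e * e = e →
      ((∀ s t : S, e * ω (s * t) * e = e ↔ (e * ω s * e = e ∧ e * ω t * e = e)) ∧
       (∀ s t : S, e * ω s * e = e → e * ω t * e = e →
         e * (s * t) * e = (e * s * e) * (e * t * e)) ∧
       (∀ s t : S, s ≤ t → e * ω t * e = e →
         (e * ω s * e = e ∧ e * s * e = e * t * e)))) ∧
    -- injectivity of α
    (∀ s t : S, ω s = ω t →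
      (∀ e : S, e * e = e →
        ((e * ω s * e = e ↔ e * ω t * e = e) ∧
         (e * ω s * e = e → e * s * e = e * t * e))) →
      s = t) := by
  have homega : ∀ s t : S, ω (s * t) = ω s * ω t :=
    omega_mul ω hpow hidem hcr_left hcr_right horthodox hnormal
  have hmono : ∀ s t : S, s ≤ t → ω s ≤ ω t := fun s t h =>
    omega_mono ω hpow hidem hle_left hle_right s t h
  have hgt : ∀ x y : S, x ≤ y → ω x = ω y → x = y := fun x y hxy hw =>
    group_triv ω hpow hidem hcr_left hcr_right horthodox hnormal hle_left hle_right x y hxy hw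
  refine ⟨homega, hmono, ?_, ?_⟩
  · intro e he
    -- reusable facts
    have hωe : ω e = e := omega_of_idem ω hpow e he
    refine ⟨?_, ?_, ?_⟩
    · -- the iff
      intro s t
      rw [homega s t]
      constructor
      · intro hA
        constructor
        · have k1 : (e*ω s)*(e*ω s) = e*ω s := horthodox e (ω s) he (hidem s)
          calc e*ω s*e
              = e*ω s*(e*(ω s*ω t)*e) := by rw [hA]
            _ = ((e*ω s)*(e*ω s))*(ω t*e) := by simp only [mul_assoc]
            _ = (e*ω s)*(ω t*e) := by rw [k1]
            _ = e*(ω s*ω t)*e := by simp only [mul_assoc]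
            _ = e := hA
        · calc e*ω t*e
              = (e*(ω s*ω t)*e)*(ω t*e) := by rw [hA, mul_assoc]
            _ = e*(ω s*ω t)*e*ω t*e := by simp only [mul_assoc]
            _ = e*(ω s*ω t)*ω t*e := by
                rw [band_reg horthodox hnormal e (ω s*ω t) (ω t) he
                  (horthodox _ _ (hidem s) (hidem t)) (hidem t)]
            _ = (e*(ω s*(ω t*ω t)))*e := by simp only [mul_assoc]
            _ = (e*(ω s*ω t))*e := by rw [hidem t]
            _ = e := hA
      · rintro ⟨h1, h2⟩
        calc e*(ω s*ω t)*e
            = e*ω s*ω t*e := by simp only [mul_assoc]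
          _ = e*ω s*e*ω t*e :=
              (band_reg horthodox hnormal e (ω s) (ω t) he (hidem s) (hidem t)).symm
          _ = (e*ω s*e)*(ω t*e) := by simp only [mul_assoc]
          _ = e*(ω t*e) := by rw [h1]
          _ = e*ω t*e := by simp only [mul_assoc]
          _ = e := h2
    · -- multiplicativity
      intro s t hes het
      have hFG : (ω s*ω t)*(ω s*ω t) = ω s*ω t := horthodox _ _ (hidem s) (hidem t)
      have hfge : e*(ω s*ω t)*e = e := by
        calc e*(ω s*ω t)*e
            = e*ω s*ω t*e := by simp only [mul_assoc]
          _ = e*ω s*e*ω t*e :=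
              (band_reg horthodox hnormal e (ω s) (ω t) he (hidem s) (hidem t)).symm
          _ = (e*ω s*e)*(ω t*e) := by simp only [mul_assoc]
          _ = e*(ω t*e) := by rw [hes]
          _ = e*ω t*e := by simp only [mul_assoc]
          _ = e := het
      have hω1 : ω (e*(s*t)*e) = e := by
        rw [homega (e*(s*t)) e, homega e (s*t), homega s t, hωe]
        exact hfge
      have hω2 : ω ((e*s*e)*(e*t*e)) = e := by
        rw [homega (e*s*e) (e*t*e), homega (e*s) e, homega e s, homega (e*t) e,
          homega e t, hωe, hes, het, he]
      have hstm : (s*(ω s*ω t))*t = s*t := by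
        calc (s*(ω s*ω t))*t = ((s*ω s)*ω t)*t := by simp only [mul_assoc]
          _ = (s*ω t)*t := by rw [hcr_right s]
          _ = s*(ω t*t) := by simp only [mul_assoc]
          _ = s*t := by rw [hcr_left t]
      have hineq1 : ω s*ω t ≤ (ω s*ω t)*e*(ω s*ω t) := by
        have := hineq (ω s*ω t) e
        rwa [omega_of_idem ω hpow _ hFG, hωe] at this
      have h_d : (e*(s*((ω s*ω t)*t)))*e ≤ (e*(s*(((ω s*ω t)*e*(ω s*ω t))*t)))*e :=
        hle_right _ _ e (hle_left _ _ e (hle_left _ _ s (hle_right _ _ t hineq1)))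
      have hcoll : s*((ω s*ω t)*t) = s*t := by rw [← mul_assoc]; exact hstm
      rw [hcoll] at h_d
      -- collapse the right-hand side
      have hgfg_idem : (ω t*ω s*ω t)*(ω t*ω s*ω t) = ω t*ω s*ω t :=
        horthodox (ω t*ω s) (ω t) (horthodox (ω t) (ω s) (hidem t) (hidem s)) (hidem t)
      have hgfg_l : ω t * (ω t*ω s*ω t) = ω t*ω s*ω t := by
        calc ω t*(ω t*ω s*ω t) = (ω t*ω t)*(ω s*ω t) := by simp only [mul_assoc]
          _ = ω t*(ω s*ω t) := by rw [hidem t]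
          _ = ω t*ω s*ω t := by simp only [mul_assoc]
      have hgfg_r : (ω t*ω s*ω t) * ω t = ω t*ω s*ω t := by
        calc (ω t*ω s*ω t)*ω t = ω t*ω s*(ω t*ω t) := by simp only [mul_assoc]
          _ = ω t*ω s*ω t := by rw [hidem t]
      have hCLt2 : t * (ω t*ω s*ω t) = (ω t*ω s*ω t) * t :=
        conj_comm ω hpow hidem hcr_left hcr_right horthodox hnormal t _ hgfg_idem hgfg_l hgfg_r
      have hcomm4a : (ω s*ω t)*e*(ω s*ω t) = ω s*e*ω t*(ω s*ω t) :=
        band_comm4 horthodox hnormal (ω s) (ω t) e (ω s*ω t) (hidem s) (hidem t) he hFG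
      have tail2 : ω s*(ω t*e) = ω s*e := by
        calc ω s*(ω t*e) = ω s*(ω t*(e*e)) := by rw [he]
          _ = ω s*ω t*e*e := by simp only [mul_assoc]
          _ = ω s*e*ω t*e := band_comm4 horthodox hnormal (ω s) (ω t) e e (hidem s) (hidem t) he he
          _ = ω s*(e*ω t*e) := by simp only [mul_assoc]
          _ = ω s*e := by rw [het]
      have tail3 : ω t*(ω s*e) = ω t*e := by
        calc ω t*(ω s*e) = ω t*(ω s*(e*e)) := by rw [he]
          _ = ω t*ω s*e*e := by simp only [mul_assoc]
          _ = ω t*e*ω s*e := band_comm4 horthodox hnormal (ω t) (ω s) e e (hidem t) (hidem s) he he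
          _ = ω t*(e*ω s*e) := by simp only [mul_assoc]
          _ = ω t*e := by rw [hes]
      have hW : (e*(s*(((ω s*ω t)*e*(ω s*ω t))*t)))*e = (e*s*e)*(e*t*e) := by
        calc (e*(s*(((ω s*ω t)*e*(ω s*ω t))*t)))*e
            = (e*(s*((ω s*e*ω t*(ω s*ω t))*t)))*e := by rw [hcomm4a]
          _ = (e*(s*ω s))*(e*(ω t*(ω s*(ω t*(t*e))))) := by simp only [mul_assoc]
          _ = (e*s)*(e*(ω t*(ω s*(ω t*(t*e))))) := by rw [hcr_right s]
          _ = (e*s)*((e*((ω t*ω s*ω t)*t))*e) := by simp only [mul_assoc]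
          _ = (e*s)*((e*(t*(ω t*ω s*ω t)))*e) := by rw [← hCLt2]
          _ = (e*s)*((e*((t*ω t)*(ω s*ω t)))*e) := by simp only [mul_assoc]
          _ = (e*s)*((e*(t*(ω s*ω t)))*e) := by rw [hcr_right t]
          _ = (e*s)*((e*t)*(ω s*(ω t*e))) := by simp only [mul_assoc]
          _ = (e*s)*((e*t)*(ω s*e)) := by rw [tail2]
          _ = (e*s)*((e*(t*ω t))*(ω s*e)) := by rw [hcr_right t]
          _ = (e*s)*((e*t)*(ω t*(ω s*e))) := by simp only [mul_assoc]
          _ = (e*s)*((e*t)*(ω t*e)) := by rw [tail3]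
          _ = (e*s)*((e*(t*ω t))*e) := by simp only [mul_assoc]
          _ = (e*s)*((e*t)*e) := by rw [hcr_right t]
          _ = (e*s)*(((e*e)*t)*e) := by rw [he]
          _ = (e*s*e)*(e*t*e) := by simp only [mul_assoc]
      rw [hW] at h_d
      exact hgt _ _ h_d (hω1.trans hω2.symm)
    · -- isotonicity
      intro s t hst het
      have hfg2 : ω s ≤ ω t := hmono s t hst
      have h1 : e*ω s*e ≤ e*ω t*e := hle_right _ _ e (hle_left _ _ e hfg2)
      have h2 : e ≤ e*ω s*e := by
        have := hineq e s
        rwa [hωe] at this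
      have hes : e*ω s*e = e := le_antisymm (le_trans h1 (le_of_eq het)) h2
      refine ⟨hes, ?_⟩
      have h3 : e*s*e ≤ e*t*e := hle_right _ _ e (hle_left _ _ e hst)
      have hωs : ω (e*s*e) = e := by
        rw [homega (e*s) e, homega e s, hωe]; exact hes
      have hωt : ω (e*t*e) = e := by
        rw [homega (e*t) e, homega e t, hωe]; exact het
      exact hgt _ _ h3 (hωs.trans hωt.symm)
  · -- injectivity
    intro s t hω h
    obtain ⟨-, h2⟩ := h (ω s) (hidem s)
    have key : ω s * ω s * ω s = ω s := by rw [hidem s, hidem s]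
    have h3 := h2 key
    have hl : ω s * s * ω s = s := by rw [hcr_left s, hcr_right s]
    have hr : ω s * t * ω s = t := by rw [hω, hcr_left t, hcr_right t]
    rw [hl, hr] at h3
    exact h3
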